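/- Let χ be a primitive Dirichlet character modulo q > 1 and let m = min{n ≥ 2 : χ(n) ≠ 0}. Define G(s, χ) = −(m^s / (χ(m) · log m)) · L'(s, χ). Then for every s = σ + it with σ ≥ 2, |G(s, χ) − 1| ≤ 2·(1 + 8m/σ)·exp(−σ/(2m)). -/

import Mathlib

/-!
Since `L'(s, χ) = -∑ χ(n) log n / n ^ s` for `re s > 1`, the normalisation in `G` turns the
term `n = m` into `1`, while the terms with `n < m` vanish (`χ(n) = 0` for `2 ≤ n < m`, and
`log 1 = 0`). Hence `‖G s - 1‖ ≤ (m ^ σ / log m) ∑_{n > m} log n / n ^ σ`. Comparing the tail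
with an explicit antiderivative bounds it by its first term plus
`(log x + σ/(σ-1)) x ^ (1 - σ) / (σ - 1)` at `x = m + 1`; after multiplying by `m ^ σ`, the
factor `(m / (m + 1)) ^ σ ≤ exp (-σ / (2 m))` appears and the remaining factor is at most
`2 (1 + 8 m / σ)`.
-/

open DirichletCharacter LSeries Real

lemma tsum_le_of_le_sub_succ {g F : ℕ → ℝ} (hg : ∀ n, 0 ≤ g n) (hF : ∀ n, 0 ≤ F n)
    (hstep : ∀ n, g n ≤ F n - F (n + 1)) : ∑' n, g n ≤ F 0 :=
  Real.tsum_le_of_sum_range_le hg fun K => calc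
    ∑ i ∈ Finset.range K, g i ≤ ∑ i ∈ Finset.range K, (F i - F (i + 1)) :=
      Finset.sum_le_sum fun i _ => hstep i
    _ = F 0 - F K := Finset.sum_range_sub' F K
    _ ≤ F 0 := sub_le_self _ (hF K)

/-- Its derivative is `-(log x + 1) * x ^ (-σ)`, so it majorises the tail integral
`∫_x^∞ log t * t ^ (-σ) dt` (which it exceeds by `x ^ (1 - σ) / (σ - 1)`). -/
noncomputable def logRpowTail (σ x : ℝ) : ℝ := (log x + σ / (σ - 1)) * x ^ (1 - σ) / (σ - 1)

lemma hasDerivAt_logRpowTail {σ x : ℝ} (hσ : 1 < σ) (hx : 0 < x) :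
    HasDerivAt (logRpowTail σ) (-((log x + 1) * x ^ (-σ))) x := by
  have h := (((hasDerivAt_log hx.ne').add_const (σ / (σ - 1))).mul
    (hasDerivAt_rpow_const (p := 1 - σ) (Or.inl hx.ne'))).div_const (σ - 1)
  refine h.congr_deriv ?_
  have hσ1 : σ - 1 ≠ 0 := by linarith
  rw [show 1 - σ - 1 = -σ by ring, show 1 - σ = 1 + -σ by ring, rpow_add hx, rpow_one]
  field_simp
  ring

lemma logRpowTail_nonneg {σ x : ℝ} (hσ : 1 < σ) (hx : 1 ≤ x) : 0 ≤ logRpowTail σ x := by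
  have hσ1 : 0 < σ - 1 := by linarith
  have := log_nonneg hx
  unfold logRpowTail
  positivity

lemma log_mul_rpow_neg_succ_le_logRpowTail_sub {σ x : ℝ} (hσ : 1 < σ) (hx : 1 ≤ x) :
    log (x + 1) * (x + 1) ^ (-σ) ≤ logRpowTail σ x - logRpowTail σ (x + 1) := by
  obtain ⟨ξ, ⟨hxξ, hξx⟩, hξ⟩ := exists_hasDerivAt_eq_slope (logRpowTail σ) _ (lt_add_one x)
    (fun y hy => (hasDerivAt_logRpowTail hσ (by linarith [hy.1])).continuousAt.continuousWithinAt)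
    (fun y hy => hasDerivAt_logRpowTail hσ (by linarith [hy.1]))
  rw [add_sub_cancel_left, div_one] at hξ
  have hξ0 : 0 < ξ := by linarith
  have hlog : log (x + 1) ≤ log ξ + 1 := calc
    log (x + 1) ≤ log (2 * ξ) := log_le_log (by linarith) (by linarith)
    _ = log 2 + log ξ := log_mul two_ne_zero hξ0.ne'
    _ ≤ log ξ + 1 := by linarith [log_two_lt_d9]
  have hpow : (x + 1) ^ (-σ) ≤ ξ ^ (-σ) := rpow_le_rpow_of_nonpos hξ0 hξx.le (by linarith)
  have := mul_le_mul hlog hpow (by positivity) (by linarith [log_nonneg (by linarith : 1 ≤ ξ)])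
  linarith

lemma tsum_le_log_mul_rpow_neg_add_logRpowTail {σ a : ℝ} (hσ : 1 < σ) (ha : 1 ≤ a)
    {g : ℕ → ℝ} (hg0 : ∀ k, 0 ≤ g k) (hg : ∀ k : ℕ, g k ≤ log (a + k) * (a + k) ^ (-σ)) :
    ∑' k, g k ≤ log a * a ^ (-σ) + logRpowTail σ a := by
  have ha' : ∀ k : ℕ, 1 ≤ a + k := fun k => by linarith [k.cast_nonneg (α := ℝ)]
  have key := tsum_le_of_le_sub_succ hg0
    (F := fun k => log (a + k) * (a + k) ^ (-σ) + logRpowTail σ (a + k))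
    (fun k => add_nonneg
      (mul_nonneg (log_nonneg (ha' k)) (rpow_nonneg (zero_le_one.trans (ha' k)) _))
      (logRpowTail_nonneg hσ (ha' k)))
    (fun k => by
      have := log_mul_rpow_neg_succ_le_logRpowTail_sub hσ (ha' k)
      push_cast [← add_assoc]
      linarith [hg k])
  simpa using key

lemma rpow_div_add_one_le_exp {M σ : ℝ} (hM : 1 ≤ M) (hσ : 0 ≤ σ) :
    (M / (M + 1)) ^ σ ≤ exp (-(σ / (2 * M))) := calc
  (M / (M + 1)) ^ σ ≤ exp (-(1 / (M + 1))) ^ σ := by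
    refine rpow_le_rpow (by positivity) ?_ hσ
    have := add_one_le_exp (-(1 / (M + 1)))
    rwa [show -(1 / (M + 1)) + 1 = M / (M + 1) by field_simp; ring] at this
  _ = exp (-(σ / (M + 1))) := by rw [← exp_mul]; ring_nf
  _ ≤ exp (-(σ / (2 * M))) := by
    gcongr
    linarith

lemma log_add_one_div_log_add_le {M σ : ℝ} (hM : 2 ≤ M) (hσ : 2 ≤ σ) :
    log (M + 1) / log M + (log (M + 1) + σ / (σ - 1)) / log M * ((M + 1) / (σ - 1))
      ≤ 2 * (1 + 8 * M / σ) := by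
  have hlogM : log 2 ≤ log M := log_le_log two_pos hM
  have hlog2 := log_two_gt_d9
  have hlogM0 : 0 < log M := by linarith
  have hlog_succ : log (M + 1) ≤ 2 * log M := by
    rw [← log_rpow (by linarith)]
    exact log_le_log (by linarith) (by norm_num; nlinarith)
  have hσ' : σ / (σ - 1) ≤ 2 := by rw [div_le_iff₀ (by linarith)]; linarith
  have h1 : log (M + 1) / log M ≤ 2 := by rw [div_le_iff₀ hlogM0]; linarith
  have h2 : (log (M + 1) + σ / (σ - 1)) / log M ≤ 5 := by rw [div_le_iff₀ hlogM0]; linarith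
  have h3 : (M + 1) / (σ - 1) ≤ 3 * (M / σ) := by
    rw [div_le_iff₀ (by linarith), mul_div_assoc', div_mul_eq_mul_div, le_div_iff₀ (by linarith)]
    nlinarith
  have h4 : 0 ≤ (M + 1) / (σ - 1) := div_nonneg (by linarith) (by linarith)
  have h5 := mul_le_mul h2 h3 h4 (by norm_num)
  have h6 : 0 ≤ M / σ := by positivity
  rw [mul_div_assoc]
  linarith

lemma rpow_div_log_mul_tail_le {M σ : ℝ} (hM : 2 ≤ M) (hσ : 2 ≤ σ) :
    M ^ σ / log M * (log (M + 1) * (M + 1) ^ (-σ) + logRpowTail σ (M + 1))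
      ≤ 2 * (1 + 8 * M / σ) * exp (-(σ / (2 * M))) := by
  have hM1 : 0 < M + 1 := by linarith
  have hlogM : 0 < log M := log_pos (by linarith)
  have hσ1 : σ - 1 ≠ 0 := by linarith
  have hfactor : M ^ σ / log M * (log (M + 1) * (M + 1) ^ (-σ) + logRpowTail σ (M + 1))
      = (M / (M + 1)) ^ σ * (log (M + 1) / log M
        + (log (M + 1) + σ / (σ - 1)) / log M * ((M + 1) / (σ - 1))) := by
    rw [logRpowTail, div_rpow (by linarith) hM1.le, show 1 - σ = 1 + -σ by ring,
      rpow_add hM1, rpow_one, rpow_neg hM1.le]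
    field_simp
  have hbracket : 0 ≤ log (M + 1) / log M
      + (log (M + 1) + σ / (σ - 1)) / log M * ((M + 1) / (σ - 1)) := by
    have := log_nonneg (by linarith : 1 ≤ M + 1)
    have := div_nonneg (by linarith : 0 ≤ σ) (by linarith : 0 ≤ σ - 1)
    have := div_nonneg hM1.le (by linarith : 0 ≤ σ - 1)
    positivity
  rw [hfactor, mul_comm (2 * _)]
  exact mul_le_mul (rpow_div_add_one_le_exp (by linarith) (by linarith))
    (log_add_one_div_log_add_le hM hσ) hbracket (exp_nonneg _)

lemma LSeries_eq_term_add_tsum_nat_add {f : ℕ → ℂ} {s : ℂ} (hf : LSeriesSummable f s) {m : ℕ}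
    (hf0 : ∀ n < m, f n = 0) :
    LSeries f s = term f s m + ∑' k, term f s (k + (m + 1)) := by
  rw [LSeries, ← hf.sum_add_tsum_nat_add (m + 1), Finset.sum_range_succ,
    Finset.sum_eq_zero fun n hn => by simp [term, hf0 n (Finset.mem_range.1 hn)], zero_add]

namespace DirichletCharacter

lemma norm_eq_one_of_ne_zero {F : Type*} [NormedField F] {n : ℕ} {χ : DirichletCharacter F n}
    {a : ZMod n} (h : χ a ≠ 0) : ‖χ a‖ = 1 := by
  have ha : IsUnit a := by_contra fun ha => h (χ.map_nonunit ha)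
  exact χ.unit_norm_eq_one ha.unit

lemma abscissaOfAbsConv_lt_re {q : ℕ} [NeZero q] (χ : DirichletCharacter ℂ q) {s : ℂ}
    (hs : 1 < s.re) : abscissaOfAbsConv (χ ·) < s.re := by
  rw [absicssaOfAbsConv_eq_one (NeZero.ne q)]
  exact_mod_cast hs

lemma norm_term_logMul_le {q : ℕ} (χ : DirichletCharacter ℂ q) (s : ℂ) (n : ℕ) :
    ‖term (logMul (χ ·)) s n‖ ≤ log n * (n : ℝ) ^ (-s.re) := by
  rcases n.eq_zero_or_pos with rfl | hn
  · simp
  rw [norm_term_eq, if_neg hn.ne', logMul, norm_mul, ← Complex.natCast_log, Complex.norm_real,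
    norm_of_nonneg (log_natCast_nonneg n), rpow_neg n.cast_nonneg, div_eq_mul_inv]
  gcongr
  exact mul_le_of_le_one_right (log_natCast_nonneg n) (χ.norm_le_one _)

lemma two_le_and_ne_zero_of_eq_sInf {q : ℕ} [NeZero q] {χ : DirichletCharacter ℂ q} {m : ℕ}
    (hm : m = sInf {n : ℕ | 2 ≤ n ∧ χ n ≠ 0}) : 2 ≤ m ∧ χ m ≠ 0 := by
  have hq : q + 1 ∈ {n : ℕ | 2 ≤ n ∧ χ n ≠ 0} :=
    ⟨by have := NeZero.one_le (n := q); omega, by simp⟩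
  exact hm ▸ Nat.sInf_mem ⟨_, hq⟩

lemma logMul_eq_zero_of_lt_of_eq_sInf {q : ℕ} {χ : DirichletCharacter ℂ q} {m : ℕ}
    (hm : m = sInf {n : ℕ | 2 ≤ n ∧ χ n ≠ 0}) {n : ℕ} (hn : n < m) : logMul (χ ·) n = 0 := by
  rcases lt_or_ge n 2 with h | h
  · interval_cases n <;> simp [logMul]
  · have := Nat.notMem_of_lt_sInf (hm ▸ hn)
    simp only [Set.mem_ofPred_eq, not_and, not_not] at this
    simp [logMul, this h]

lemma neg_cpow_div_mul_deriv_LFunction_sub_one {q : ℕ} [NeZero q] {χ : DirichletCharacter ℂ q}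
    {m : ℕ} (hm : m = sInf {n : ℕ | 2 ≤ n ∧ χ n ≠ 0}) {s : ℂ} (hs : 1 < s.re) :
    -((m : ℂ) ^ s / (χ m * Real.log m)) * deriv (LFunction χ) s - 1
      = (m : ℂ) ^ s / (χ m * Real.log m) * ∑' k, term (logMul (χ ·)) s (k + (m + 1)) := by
  obtain ⟨hm2, hχm⟩ := two_le_and_ne_zero_of_eq_sInf hm
  have hlog : (Real.log m : ℂ) ≠ 0 :=
    Complex.ofReal_ne_zero.2 (log_pos (by exact_mod_cast hm2)).ne'
  have hpow : (m : ℂ) ^ s ≠ 0 := by simp [Complex.cpow_eq_zero_iff]; omega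
  have habs := abscissaOfAbsConv_lt_re χ hs
  have hterm : term (logMul (χ ·)) s m = Real.log m * χ m / (m : ℂ) ^ s := by
    rw [term_of_ne_zero (by omega), logMul, Complex.natCast_log]
  rw [deriv_LFunction_eq_deriv_LSeries χ hs, LSeries_deriv habs,
    LSeries_eq_term_add_tsum_nat_add (LSeriesSummable_logMul_of_lt_re habs)
      fun n hn => logMul_eq_zero_of_lt_of_eq_sInf hm hn, hterm]
  field_simp
  ring

lemma norm_tsum_term_logMul_nat_add_le {q : ℕ} [NeZero q] (χ : DirichletCharacter ℂ q) (m : ℕ)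
    {s : ℂ} (hs : 1 < s.re) :
    ‖∑' k, term (logMul (χ ·)) s (k + (m + 1))‖
      ≤ log (m + 1) * (m + 1 : ℝ) ^ (-s.re) + logRpowTail s.re (m + 1) := by
  have habs := abscissaOfAbsConv_lt_re χ hs
  have hsum : Summable fun k => ‖term (logMul (χ ·)) s (k + (m + 1))‖ :=
    (summable_nat_add_iff (f := fun n => ‖term (logMul (χ ·)) s n‖) (m + 1)).2
      (LSeriesSummable_logMul_of_lt_re habs).norm
  refine (norm_tsum_le_tsum_norm hsum).trans <| tsum_le_log_mul_rpow_neg_add_logRpowTail hs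
    (by linarith [m.cast_nonneg (α := ℝ)]) (fun k => norm_nonneg _) fun k => ?_
  convert norm_term_logMul_le χ s (k + (m + 1)) using 3 <;> push_cast <;> ring

lemma norm_cpow_div_mul_log {q : ℕ} {χ : DirichletCharacter ℂ q} {m : ℕ} (hm : 0 < m)
    (hχm : χ m ≠ 0) (s : ℂ) : ‖(m : ℂ) ^ s / (χ m * Real.log m)‖ = (m : ℝ) ^ s.re / log m := by
  rw [norm_div, norm_mul, Complex.norm_natCast_cpow_of_pos hm,
    norm_eq_one_of_ne_zero hχm, one_mul, Complex.norm_real, norm_of_nonneg (log_natCast_nonneg m)]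

end DirichletCharacter

theorem G_close_to_one_general {q : ℕ} [NeZero q]
    (χ : DirichletCharacter ℂ q)
    (m : ℕ) (hm : m = sInf {n : ℕ | 2 ≤ n ∧ χ n ≠ 0})
    (G : ℂ → ℂ)
    (hG : ∀ s : ℂ, G s = -((m : ℂ) ^ s / (χ m * Real.log m)) * deriv (LFunction χ) s)
    (s : ℂ) (hs : 2 ≤ s.re) :
    ‖G s - 1‖ ≤ 2 * (1 + 8 * m / s.re) * Real.exp (-(s.re / (2 * m))) := by
  obtain ⟨hm2, hχm⟩ := two_le_and_ne_zero_of_eq_sInf hm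
  have hs1 : 1 < s.re := by linarith
  rw [hG, neg_cpow_div_mul_deriv_LFunction_sub_one hm hs1, norm_mul,
    norm_cpow_div_mul_log (by omega) hχm]
  calc (m : ℝ) ^ s.re / log m * ‖∑' k, term (logMul (χ ·)) s (k + (m + 1))‖
      ≤ (m : ℝ) ^ s.re / log m
          * (log (m + 1) * (m + 1 : ℝ) ^ (-s.re) + logRpowTail s.re (m + 1)) := by
        gcongr
        exact norm_tsum_term_logMul_nat_add_le χ m hs1
    _ ≤ 2 * (1 + 8 * m / s.re) * exp (-(s.re / (2 * m))) :=
        rpow_div_log_mul_tail_le (by exact_mod_cast hm2) hs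

theorem G_close_to_one {q : ℕ} [NeZero q] (hq : 1 < q)
    (χ : DirichletCharacter ℂ q) (hχ : χ.IsPrimitive)
    (m : ℕ) (hm : m = sInf {n : ℕ | 2 ≤ n ∧ χ n ≠ 0})
    (G : ℂ → ℂ)
    (hG : ∀ s : ℂ, G s = -((m : ℂ) ^ s / (χ m * Real.log m)) * deriv (LFunction χ) s)
    (s : ℂ) (hs : 2 ≤ s.re) :
    ‖G s - 1‖ ≤ 2 * (1 + 8 * m / s.re) * Real.exp (-(s.re / (2 * m))) :=
  G_close_to_one_general χ m hm G hG s hs
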